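/- (Rüssmann estimate, Fourier-coefficient form) Let ω ∈ ℝ^m be Diophantine with constants γ > 0, σ > 0. Let h(θ) = Σ_{l ≠ 0} ĥ(l) e^{2πi l·θ} be a trigonometric data with zero average whose Fourier coefficients satisfy |ĥ(l)| ≤ C e^{−2πρ|l|₁} for some C, ρ > 0. Define v̂(l) = ĥ(l)/(1 − e^{2πi l·ω}) for l ≠ 0 and v̂(0) = 0. Then for every 0 < δ < ρ, Σ_{l ≠ 0} |v̂(l)| e^{2π(ρ−δ)|l|₁} ≤ c₀ γ^{−1} δ^{−(σ+m)} C, where c₀ depends only on m and σ. In particular v(θ) = Σ v̂(l) e^{2πi l·θ} is a well-defined analytic solution of v(θ) − v(θ+ω) = h(θ) on a strip of width ρ − δ. -/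

import Mathlib

/-!
Since `|1 - e^{2πix}| = 2|sin πx| ≥ 4 dist(x, ℤ)`, the Diophantine condition bounds the small
divisors from below by `4γ|l|₁^{-σ}`, so `|v̂(l)| e^{2π(ρ-δ)|l|₁} ≤ C/(4γ) · |l|₁^σ e^{-2πδ|l|₁}`.
Half of the exponential decay absorbs the polynomial loss, `n^σ ≤ (σ/πδ)^σ e^{πδn}`, and since
`|l|₁ ≥ 1` what remains is dominated by the weights `e^{-u(1+|l|₁)}` with `u = πδ/2`. Their sum
factorises over the coordinates into `e^{-u} coth(u/2)^m ≤ m! e² u^{-m}`; the factor `e^{-u}`,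
paid for by `|l|₁ ≥ 1`, is what keeps this bound of order `u^{-m}` also for large `u`.
Absolute summability of `v̂` then lets one subtract the two Fourier series term by term.
-/

open Real
open scoped Nat

theorem four_mul_abs_sub_round_le_norm_one_sub_exp (x : ℝ) :
    4 * |x - round x| ≤ ‖1 - Complex.exp (2 * π * Complex.I * x)‖ := by
  set y := x - round x
  have hy : |π * y| ≤ π / 2 := by
    rw [abs_mul, abs_of_pos pi_pos]
    nlinarith [abs_sub_round x, pi_pos]
  have hper : Complex.exp (2 * π * Complex.I * x) = Complex.exp (Complex.I * ↑(2 * π * y)) := by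
    rw [show 2 * π * Complex.I * x = Complex.I * ↑(2 * π * y) + round x * (2 * π * Complex.I) by
      push_cast [y]; ring, Complex.exp_add, Complex.exp_int_mul_two_pi_mul_I, mul_one]
  calc 4 * |y| = 2 * (2 / π * |π * y|) := by
        rw [abs_mul, abs_of_pos pi_pos]; field_simp; ring
    _ ≤ 2 * |sin (π * y)| := by gcongr; exact mul_abs_le_abs_sin hy
    _ = ‖1 - Complex.exp (2 * π * Complex.I * x)‖ := by
        rw [hper, norm_sub_rev, Complex.norm_exp_I_mul_ofReal_sub_one,
          show 2 * π * y / 2 = π * y by ring, norm_mul, Real.norm_two, Real.norm_eq_abs]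

theorem le_norm_one_sub_exp_of_le_abs_sub_int {x η : ℝ} (hx : ∀ p : ℤ, η ≤ |x - p|) :
    4 * η ≤ ‖1 - Complex.exp (2 * π * Complex.I * x)‖ :=
  (mul_le_mul_of_nonneg_left (hx (round x)) (by norm_num)).trans
    (four_mul_abs_sub_round_le_norm_one_sub_exp x)

theorem one_sub_exp_ne_zero_of_le_abs_sub_int {x η : ℝ} (hη : 0 < η)
    (hx : ∀ p : ℤ, η ≤ |x - p|) : 1 - Complex.exp (2 * π * Complex.I * x) ≠ 0 :=
  norm_pos_iff.mp ((mul_pos four_pos hη).trans_le (le_norm_one_sub_exp_of_le_abs_sub_int hx))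

theorem rpow_le_mul_exp {σ a x : ℝ} (hσ : 0 < σ) (ha : 0 < a) (hx : 0 ≤ x) :
    x ^ σ ≤ (σ / a) ^ σ * exp (a * x) := by
  have hy : 0 ≤ a * x / σ := by positivity
  calc x ^ σ = (σ / a) ^ σ * (a * x / σ) ^ σ := by
        rw [← mul_rpow (by positivity) hy]
        congr 1
        field_simp
    _ ≤ (σ / a) ^ σ * exp (a * x / σ) ^ σ := by
        gcongr
        linarith [add_one_le_exp (a * x / σ)]
    _ = (σ / a) ^ σ * exp (a * x) := by
        rw [← exp_mul, div_mul_cancel₀ _ hσ.ne']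

theorem norm_div_one_sub_exp_mul_exp_le {σ γ C ρ δ n x : ℝ} {z : ℂ} (hσ : 0 < σ) (hγ : 0 < γ)
    (hC : 0 ≤ C) (hδ : 0 < δ) (hn : 1 ≤ n) (hx : ∀ p : ℤ, γ * n ^ (-σ) ≤ |x - p|)
    (hz : ‖z‖ ≤ C * exp (-(2 * π * ρ) * n)) :
    ‖z / (1 - Complex.exp (2 * π * Complex.I * x))‖ * exp (2 * π * (ρ - δ) * n)
      ≤ C / (4 * γ) * (σ / (π * δ)) ^ σ * (exp (-(π * δ / 2)) * exp (-(π * δ / 2) * n)) := by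
  have hn0 : 0 < n := by linarith
  calc _ ≤ C * exp (-(2 * π * ρ) * n) / (4 * (γ * n ^ (-σ))) * exp (2 * π * (ρ - δ) * n) := by
        rw [norm_div]
        gcongr
        exact le_norm_one_sub_exp_of_le_abs_sub_int hx
    _ = C / (4 * γ) * (n ^ σ * exp (-(2 * π * δ) * n)) := by
        rw [rpow_neg hn0.le, show -(2 * π * δ) * n = -(2 * π * ρ) * n + 2 * π * (ρ - δ) * n by ring,
          exp_add]
        field_simp
    _ ≤ C / (4 * γ) * ((σ / (π * δ)) ^ σ * exp (π * δ * n) * exp (-(2 * π * δ) * n)) := by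
        gcongr
        exact rpow_le_mul_exp hσ (by positivity) hn0.le
    _ ≤ _ := by
        simp only [mul_assoc, ← exp_add]
        gcongr _ * (_ * exp ?_)
        nlinarith [mul_nonneg (mul_pos pi_pos hδ).le (sub_nonneg.2 hn)]

theorem one_le_sum_abs_of_ne_zero {ι : Type*} [Fintype ι] {l : ι → ℤ} (hl : l ≠ 0) :
    (1 : ℝ) ≤ ((∑ j, |l j| : ℤ) : ℝ) := by
  obtain ⟨j, hj⟩ := Function.ne_iff.mp hl
  exact_mod_cast (Int.one_le_abs hj).trans
    (Finset.single_le_sum (fun i _ => abs_nonneg (l i)) (Finset.mem_univ j))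

theorem hasSum_pow_natAbs {r : ℝ} (hr₀ : 0 ≤ r) (hr₁ : r < 1) :
    HasSum (fun k : ℤ => r ^ k.natAbs) ((1 + r) / (1 - r)) := by
  have hpos : HasSum (fun n : ℕ => r ^ (n : ℤ).natAbs) (1 - r)⁻¹ := by
    simpa using hasSum_geometric_of_lt_one hr₀ hr₁
  have hneg : HasSum (fun n : ℕ => r ^ (-((n : ℤ) + 1)).natAbs) (r * (1 - r)⁻¹) := by
    have h : (fun n : ℕ => r ^ (-((n : ℤ) + 1)).natAbs) = fun n : ℕ => r * r ^ n := by
      funext n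
      rw [show (-((n : ℤ) + 1)).natAbs = n + 1 by omega, pow_succ']
    rw [h]
    exact (hasSum_geometric_of_lt_one hr₀ hr₁).mul_left r
  have h := HasSum.of_nat_of_neg_add_one (f := fun k : ℤ => r ^ k.natAbs) hpos hneg
  rwa [show (1 - r)⁻¹ + r * (1 - r)⁻¹ = (1 + r) / (1 - r) by ring] at h

theorem HasSum.pi_prod_pow {ι : Type*} {f : ι → ℝ} {a : ℝ} (h : HasSum f a) (hf : 0 ≤ f) (m : ℕ) :
    HasSum (fun l : Fin m → ι => ∏ j, f (l j)) (a ^ m) := by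
  induction m with
  | zero => simp
  | succ m ih =>
    set g : (Fin m → ι) → ℝ := fun l => ∏ j, f (l j)
    have hg : 0 ≤ g := fun l => Finset.prod_nonneg fun j _ => hf (l j)
    have hprod := h.mul ih (h.summable.mul_of_nonneg ih.summable hf hg)
    rw [pow_succ']
    refine (Equiv.hasSum_iff (Fin.consEquiv fun _ => ι)).mp ?_
    simpa [Function.comp_def, g, Fin.prod_univ_succ] using hprod

theorem hasSum_exp_neg_mul_sum_abs (m : ℕ) {u : ℝ} (hu : 0 < u) :
    HasSum (fun l : Fin m → ℤ => exp (-u * ((∑ j, |l j| : ℤ) : ℝ)))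
      (((1 + exp (-u)) / (1 - exp (-u))) ^ m) := by
  have h := (hasSum_pow_natAbs (exp_pos (-u)).le (exp_lt_one_iff.2 (neg_lt_zero.2 hu))).pi_prod_pow
    (fun k => by positivity) m
  convert h using 1
  funext l
  simp only [← exp_nat_mul, ← exp_sum, Nat.cast_natAbs, Int.cast_sum, Finset.mul_sum]
  exact congrArg exp (Finset.sum_congr rfl fun j _ => by ring)

theorem one_add_exp_neg_div_one_sub_exp_neg_le {u : ℝ} (hu : 0 < u) :
    (1 + exp (-u)) / (1 - exp (-u)) ≤ (u + 2) / u := by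
  have hr : exp (-u) * (1 + u) ≤ 1 := by
    calc exp (-u) * (1 + u) ≤ exp (-u) * exp u := by gcongr; linarith [add_one_le_exp u]
      _ = 1 := by rw [← exp_add, neg_add_cancel, exp_zero]
  have h1 : 0 < 1 - exp (-u) := sub_pos.2 (exp_lt_one_iff.2 (neg_lt_zero.2 hu))
  rw [div_le_div_iff₀ h1 hu]
  nlinarith

theorem exp_neg_mul_tsum_exp_neg_mul_sum_abs_le (m : ℕ) {u : ℝ} (hu : 0 < u) :
    exp (-u) * ∑' l : Fin m → ℤ, exp (-u * ((∑ j, |l j| : ℤ) : ℝ)) ≤ m ! * exp 2 / u ^ m := by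
  have hpow : (u + 2) ^ m ≤ m ! * exp (u + 2) := by
    have := pow_div_factorial_le_exp (u + 2) (by positivity) m
    rwa [div_le_iff₀ (by positivity), mul_comm] at this
  rw [(hasSum_exp_neg_mul_sum_abs m hu).tsum_eq]
  calc exp (-u) * ((1 + exp (-u)) / (1 - exp (-u))) ^ m
      ≤ exp (-u) * ((u + 2) / u) ^ m := by
        have h1 : 0 < 1 - exp (-u) := sub_pos.2 (exp_lt_one_iff.2 (neg_lt_zero.2 hu))
        gcongr ?_ * ?_
        exact pow_le_pow_left₀ (by positivity) (one_add_exp_neg_div_one_sub_exp_neg_le hu) m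
    _ ≤ exp (-u) * (m ! * exp (u + 2)) / u ^ m := by
        rw [div_pow, mul_div_assoc]; gcongr
    _ = exp (-u) * exp u * m ! * exp 2 / u ^ m := by rw [exp_add]; ring
    _ = m ! * exp 2 / u ^ m := by rw [← exp_add, neg_add_cancel, exp_zero, one_mul]

theorem summable_and_tsum_le_of_le_exp_neg_mul_sum_abs {m : ℕ} {f : (Fin m → ℤ) → ℝ} {K u : ℝ}
    (hu : 0 < u) (hf₀ : 0 ≤ f)
    (hf : ∀ l, f l ≤ K * (exp (-u) * exp (-u * ((∑ j, |l j| : ℤ) : ℝ)))) :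
    Summable f ∧ ∑' l, f l ≤ K * (m ! * exp 2 / u ^ m) := by
  have hK : 0 ≤ K := nonneg_of_mul_nonneg_left ((hf₀ 0).trans (hf 0)) (by positivity)
  have hweights := ((hasSum_exp_neg_mul_sum_abs m hu).summable.mul_left (exp (-u))).mul_left K
  have hsum := Summable.of_nonneg_of_le hf₀ hf hweights
  refine ⟨hsum, ?_⟩
  calc ∑' l, f l ≤ _ := hsum.tsum_le_tsum hf hweights
    _ = K * (exp (-u) * ∑' l : Fin m → ℤ, exp (-u * ((∑ j, |l j| : ℤ) : ℝ))) := by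
      rw [tsum_mul_left, tsum_mul_left]
    _ ≤ K * (m ! * exp 2 / u ^ m) := by
      gcongr
      exact exp_neg_mul_tsum_exp_neg_mul_sum_abs_le m hu

theorem tsum_sub_tsum_shift_eq {m : ℕ} {v h : (Fin m → ℤ) → ℂ} {ω : Fin m → ℝ}
    (hv : Summable fun l => ‖v l‖)
    (hvh : ∀ l, v l * (1 - Complex.exp (2 * π * Complex.I * (∑ j, (l j : ℝ) * ω j))) = h l)
    (θ : Fin m → ℝ) :
    (∑' l, v l * Complex.exp (2 * π * Complex.I * (∑ j, (l j : ℝ) * θ j)))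
      - (∑' l, v l * Complex.exp (2 * π * Complex.I * (∑ j, (l j : ℝ) * (θ j + ω j))))
      = ∑' l, h l * Complex.exp (2 * π * Complex.I * (∑ j, (l j : ℝ) * θ j)) := by
  have hsum : ∀ θ' : Fin m → ℝ,
      Summable fun l => v l * Complex.exp (2 * π * Complex.I * (∑ j, (l j : ℝ) * θ' j)) :=
    fun θ' => hv.of_norm_bounded fun l => by simp [Complex.norm_exp]
  rw [← (hsum θ).tsum_sub (hsum fun j => θ j + ω j)]
  congr 1
  funext l
  rw [← hvh l]
  simp only [mul_add, Finset.sum_add_distrib]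
  push_cast
  rw [mul_add, Complex.exp_add]
  ring

/-- Rüssmann estimate in Fourier-coefficient form.  For Diophantine `ω`, zero-average
data with exponentially decaying Fourier coefficients, the formal solution
`vhat(l) = hhat(l)/(1 − e^{2πi l·ω})` of the cohomological equation satisfies the weighted
`ℓ¹` bound `Σ_{l≠0} |vhat(l)| e^{2π(ρ−δ)|l|₁} ≤ c₀ γ⁻¹ δ^{−(σ+m)} C` with `c₀ = c₀(m,σ)`;
in particular `v(θ) = Σ vhat(l) e^{2πi l·θ}` solves `v(θ) − v(θ+ω) = h(θ)`. -/
theorem russmann_estimate (m : ℕ) (σ : ℝ) (hσ : 0 < σ) :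
    ∃ c₀ : ℝ, 0 < c₀ ∧
      ∀ (γ : ℝ), 0 < γ →
      ∀ (ω : Fin m → ℝ),
        (∀ l : Fin m → ℤ, l ≠ 0 → ∀ p : ℤ,
          γ * ((∑ j, |l j| : ℤ) : ℝ) ^ (-σ) ≤ |(∑ j, (l j : ℝ) * ω j) - p|) →
      ∀ (hhat vhat : (Fin m → ℤ) → ℂ) (C ρ : ℝ), 0 ≤ C → 0 < ρ →
        hhat 0 = 0 →
        (∀ l : Fin m → ℤ, l ≠ 0 →
          ‖hhat l‖ ≤ C * Real.exp (-(2 * π * ρ) * ((∑ j, |l j| : ℤ) : ℝ))) →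
        vhat 0 = 0 →
        (∀ l : Fin m → ℤ, l ≠ 0 →
          vhat l = hhat l /
            (1 - Complex.exp (2 * π * Complex.I * (∑ j, (l j : ℝ) * ω j)))) →
      ∀ δ : ℝ, 0 < δ → δ < ρ →
        (∑' l : Fin m → ℤ,
            ‖vhat l‖ * Real.exp (2 * π * (ρ - δ) * ((∑ j, |l j| : ℤ) : ℝ)))
          ≤ c₀ * γ⁻¹ * δ ^ (-(σ + m)) * C ∧
        ∀ θ : Fin m → ℝ,
          (∑' l : Fin m → ℤ,
              vhat l * Complex.exp (2 * π * Complex.I * (∑ j, (l j : ℝ) * θ j)))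
          - (∑' l : Fin m → ℤ,
              vhat l * Complex.exp (2 * π * Complex.I * (∑ j, (l j : ℝ) * (θ j + ω j))))
          = ∑' l : Fin m → ℤ,
              hhat l * Complex.exp (2 * π * Complex.I * (∑ j, (l j : ℝ) * θ j)) := by
  refine ⟨(σ / π) ^ σ * 2 ^ m * m ! * exp 2 / (4 * π ^ m), by positivity, ?_⟩
  intro γ hγ ω hdio hhat vhat C ρ hC _ hh0 hhb hv0 hvf δ hδ hδρ
  have hbound : ∀ l, ‖vhat l‖ * exp (2 * π * (ρ - δ) * ((∑ j, |l j| : ℤ) : ℝ))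
      ≤ C / (4 * γ) * (σ / (π * δ)) ^ σ *
        (exp (-(π * δ / 2)) * exp (-(π * δ / 2) * ((∑ j, |l j| : ℤ) : ℝ))) := by
    intro l
    rcases eq_or_ne l 0 with rfl | hl
    · rw [hv0, norm_zero, zero_mul]
      positivity
    · rw [hvf l hl]
      exact norm_div_one_sub_exp_mul_exp_le hσ hγ hC hδ (one_le_sum_abs_of_ne_zero hl)
        (hdio l hl) (hhb l hl)
  obtain ⟨hsum, hle⟩ :=
    summable_and_tsum_le_of_le_exp_neg_mul_sum_abs (by positivity) (fun l => by positivity) hbound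
  refine ⟨hle.trans_eq ?_, tsum_sub_tsum_shift_eq ?_ fun l => ?_⟩
  · have hδσ : (σ / (π * δ)) ^ σ = (σ / π) ^ σ / δ ^ σ := by
      rw [div_mul_eq_div_div, div_rpow (by positivity) hδ.le]
    rw [neg_add, rpow_add hδ, rpow_neg hδ.le, rpow_neg hδ.le, rpow_natCast, hδσ, div_pow, mul_pow]
    field_simp
  · refine hsum.of_nonneg_of_le (fun l => norm_nonneg _) fun l =>
      le_mul_of_one_le_right (norm_nonneg _) (one_le_exp ?_)
    have : 0 ≤ ρ - δ := sub_nonneg.2 hδρ.le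
    positivity
  · rcases eq_or_ne l 0 with rfl | hl
    · rw [hv0, hh0, zero_mul]
    · have hn := one_pos.trans_le (one_le_sum_abs_of_ne_zero hl)
      rw [hvf l hl, div_mul_cancel₀ _
        (one_sub_exp_ne_zero_of_le_abs_sub_int (mul_pos hγ (rpow_pos_of_pos hn _)) (hdio l hl))]
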